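/- Let L(v) = C + Σ_{p=1}^N A(p)/(v_p − v) where C, A(1), …, A(N) are n×n matrices over a Poisson algebra, the entries of C Poisson-commute with everything, each A(p) satisfies {a_i^j(p), a_k^l(p)} = a_i^l(p)δ_k^j − a_k^j(p)δ_i^l, and entries of A(p), A(q) Poisson-commute for p ≠ q. Then for all u ≠ v (with u, v distinct from all poles v_p), {L₁(u), L₂(v)} = [L₁(u) + L₂(v), P/(u−v)]. -/

import Mathlib

open Kronecker

/-- The flip matrix on the tensor square, over a ring 𝒜. -/
def flipMatrix (n : ℕ) (𝒜 : Type*) [CommRing 𝒜] :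
    Matrix (Fin n × Fin n) (Fin n × Fin n) 𝒜 :=
  fun p q => if p.1 = q.2 ∧ p.2 = q.1 then 1 else 0

lemma mul_flip {n : ℕ} {𝒜 : Type*} [CommRing 𝒜]
    (M : Matrix (Fin n × Fin n) (Fin n × Fin n) 𝒜) (p q : Fin n × Fin n) :
    (M * flipMatrix n 𝒜) p q = M p (q.2, q.1) := by
  rw [Matrix.mul_apply]
  have h : ∀ σ : Fin n × Fin n, flipMatrix n 𝒜 σ q = if σ = (q.2, q.1) then 1 else 0 := by
    intro σ; simp [flipMatrix, Prod.ext_iff]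
  simp [h, mul_ite]

lemma flip_mul {n : ℕ} {𝒜 : Type*} [CommRing 𝒜]
    (M : Matrix (Fin n × Fin n) (Fin n × Fin n) 𝒜) (p q : Fin n × Fin n) :
    (flipMatrix n 𝒜 * M) p q = M (p.2, p.1) q := by
  rw [Matrix.mul_apply]
  have h : ∀ σ : Fin n × Fin n, flipMatrix n 𝒜 p σ = if σ = (p.2, p.1) then 1 else 0 := by
    intro σ; simp [flipMatrix, Prod.ext_iff, eq_comm, and_comm]
  simp [h, ite_mul]

lemma br_sum₁ {𝒜 : Type*} [CommRing 𝒜] (br : 𝒜 → 𝒜 → 𝒜)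
    (h0 : ∀ b, br 0 b = 0) (hadd : ∀ a b c, br (a + b) c = br a c + br b c)
    {ι : Type*} [DecidableEq ι] (s : Finset ι) (f : ι → 𝒜) (b : 𝒜) :
    br (∑ p ∈ s, f p) b = ∑ p ∈ s, br (f p) b := by
  induction s using Finset.induction with
  | empty => simp [h0]
  | @insert a s h ih => rw [Finset.sum_insert h, Finset.sum_insert h, hadd, ih]

lemma br_sum₂ {𝒜 : Type*} [CommRing 𝒜] (br : 𝒜 → 𝒜 → 𝒜)
    (h0 : ∀ b, br b 0 = 0) (hadd : ∀ a b c, br a (b + c) = br a b + br a c)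
    {ι : Type*} [DecidableEq ι] (s : Finset ι) (f : ι → 𝒜) (b : 𝒜) :
    br b (∑ p ∈ s, f p) = ∑ p ∈ s, br b (f p) := by
  induction s using Finset.induction with
  | empty => simp [h0]
  | @insert a s h ih => rw [Finset.sum_insert h, Finset.sum_insert h, hadd, ih]

theorem gaudin_specialization {n N : ℕ} {𝒜 : Type*} [CommRing 𝒜] [Algebra ℂ 𝒜]
    (br : 𝒜 → 𝒜 → 𝒜)  -- Poisson bracket on 𝒜
    (hadd₁ : ∀ a b c : 𝒜, br (a + b) c = br a c + br b c)
    (hadd₂ : ∀ a b c : 𝒜, br a (b + c) = br a b + br a c)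
    (hsmul₁ : ∀ (z : ℂ) (a b : 𝒜), br (z • a) b = z • br a b)
    (hsmul₂ : ∀ (z : ℂ) (a b : 𝒜), br a (z • b) = z • br a b)
    (C : Matrix (Fin n) (Fin n) 𝒜) (A : Fin N → Matrix (Fin n) (Fin n) 𝒜)
    (vp : Fin N → ℂ) (hvp : Function.Injective vp)
    -- each A(p) satisfies the gl(n) Poisson–Lie relations
    (hA : ∀ (p : Fin N) (i j k l : Fin n),
      br (A p i j) (A p k l) =
        (if k = j then A p i l else 0) - (if i = l then A p k j else 0))
    -- entries of A(p), A(q) Poisson-commute for p ≠ q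
    (hApq : ∀ (p q : Fin N), p ≠ q → ∀ i j k l, br (A p i j) (A q k l) = 0)
    -- entries of C Poisson-commute with everything
    (hC : ∀ (i j : Fin n) (a : 𝒜), br (C i j) a = 0 ∧ br a (C i j) = 0)
    (u v : ℂ) (huv : u ≠ v) (hu : ∀ p, u ≠ vp p) (hv : ∀ p, v ≠ vp p) :
    letI L : ℂ → Matrix (Fin n) (Fin n) 𝒜 := fun w => C + ∑ p, ((vp p - w)⁻¹ : ℂ) • A p
    (fun (pr qr : Fin n × Fin n) => br (L u pr.1 qr.1) (L v pr.2 qr.2)) =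
      ((L u ⊗ₖ (1 : Matrix (Fin n) (Fin n) 𝒜)) + ((1 : Matrix (Fin n) (Fin n) 𝒜) ⊗ₖ L v)) *
          (((u - v)⁻¹ : ℂ) • flipMatrix n 𝒜) -
        (((u - v)⁻¹ : ℂ) • flipMatrix n 𝒜) *
          ((L u ⊗ₖ (1 : Matrix (Fin n) (Fin n) 𝒜)) + ((1 : Matrix (Fin n) (Fin n) 𝒜) ⊗ₖ L v)) := by
  set L : ℂ → Matrix (Fin n) (Fin n) 𝒜 := fun w => C + ∑ p, ((vp p - w)⁻¹ : ℂ) • A p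
    with hLdef
  set c : ℂ := (u - v)⁻¹ with hc
  set α : Fin N → ℂ := fun p => (vp p - u)⁻¹ with hα
  set β : Fin N → ℂ := fun p => (vp p - v)⁻¹ with hβ
  have hL : ∀ (w : ℂ) (a b : Fin n), L w a b = C a b + ∑ p, ((vp p - w)⁻¹ : ℂ) • A p a b := by
    intro w a b
    rw [hLdef]
    simp [Matrix.add_apply, Matrix.sum_apply, Matrix.smul_apply]
  have h0₁ : ∀ b : 𝒜, br 0 b = 0 := fun b => by
    have := hsmul₁ 0 0 b; simpa using this
  have h0₂ : ∀ b : 𝒜, br b 0 = 0 := fun b => by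
    have := hsmul₂ 0 b 0; simpa using this
  -- key scalar identity
  have key : ∀ p : Fin N, c * (α p - β p) = α p * β p := by
    intro p
    have h1 : vp p - u ≠ 0 := sub_ne_zero.mpr (Ne.symm (hu p))
    have h2 : vp p - v ≠ 0 := sub_ne_zero.mpr (Ne.symm (hv p))
    have h3 : u - v ≠ 0 := sub_ne_zero.mpr huv
    rw [hc, hα, hβ]
    field_simp
    ring
  have keyL : ∀ a b : Fin n, c • (L u a b - L v a b) = ∑ p, (α p * β p) • A p a b := by
    intro a b
    rw [hL, hL]
    have : C a b + (∑ p, ((vp p - u)⁻¹ : ℂ) • A p a b) -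
        (C a b + ∑ p, ((vp p - v)⁻¹ : ℂ) • A p a b)
        = ∑ p, (α p - β p) • A p a b := by
      rw [add_sub_add_left_eq_sub, ← Finset.sum_sub_distrib]
      exact Finset.sum_congr rfl fun p _ => (sub_smul _ _ _).symm
    rw [this, Finset.smul_sum]
    refine Finset.sum_congr rfl fun p _ => ?_
    rw [smul_smul, key p]
  -- LHS entry
  funext pr qr
  obtain ⟨i, k⟩ := pr
  obtain ⟨j, l⟩ := qr
  have lhs_eq : br (L u i j) (L v k l)
      = ∑ p, (α p * β p) • ((if k = j then A p i l else 0) - (if i = l then A p k j else 0)) := by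
    rw [hL, hL, hadd₁, hadd₂, hadd₂, (hC i j _).1, (hC i j _).1,
      (hC k l (∑ p, ((vp p - u)⁻¹ : ℂ) • A p i j)).2]
    rw [br_sum₁ br h0₁ hadd₁]
    simp only [zero_add, add_zero]
    rw [Finset.sum_congr rfl (fun p _ => br_sum₂ br h0₂ hadd₂ Finset.univ _ _)]
    have inner : ∀ p : Fin N,
        (∑ q, br (((vp p - u)⁻¹ : ℂ) • A p i j) (((vp q - v)⁻¹ : ℂ) • A q k l))
        = (α p * β p) • ((if k = j then A p i l else 0) - (if i = l then A p k j else 0)) := by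
      intro p
      rw [Finset.sum_eq_single p]
      · rw [hsmul₁, hsmul₂, smul_smul, hA]
      · intro q _ hq
        rw [hsmul₁, hsmul₂, hApq p q (Ne.symm hq), smul_zero, smul_zero]
      · intro h; exact absurd (Finset.mem_univ p) h
    rw [Finset.sum_congr rfl (fun p _ => inner p)]
  show br (L u i j) (L v k l) = _
  rw [lhs_eq]
  -- RHS entry
  rw [Matrix.sub_apply, Matrix.mul_smul, Matrix.smul_mul, Matrix.smul_apply, Matrix.smul_apply,
    mul_flip, flip_mul]
  simp only [Matrix.add_apply, Matrix.kroneckerMap_apply, Matrix.one_apply]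
  by_cases hkj : k = j <;> by_cases hil : i = l <;>
    simp [hkj, hil, mul_comm, smul_sub, ← keyL, Finset.sum_sub_distrib] <;> abel_nf
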